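/- The forcing poset $\mathbb{P}_\mathcal{U}$ is $\kappa^+$-closed: every decreasing sequence of conditions of length $\kappa$ has a lower bound. Here a condition is a pair $(\mathcal{A}, A)$ with $\mathcal{A}$ a $\kappa$-independent family of cardinality $\kappa$ and $A \in \mathcal{U}$ such that $\mathcal{A}^h \cap A$ is unbounded for every finite Boolean combination; $(\mathcal{A}_1, A_1) \le (\mathcal{A}_0, A_0)$ iff $\mathcal{A}_1 \supseteq \mathcal{A}_0$ and $A_1 \setminus A_0$ is bounded. -/

import Mathlib

/-!
Take for `ℬ` the union of the families and for `B` the diagonal intersection `Δᵢ Aᵢ` together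
with a sequence `(x_α)_{α<κ}`. Normality puts `Δᵢ Aᵢ` in `𝒰`, and `Δᵢ Aᵢ \ Aᵢ ⊆ [0, i]`.
There are only `κ` pairs `(h, β)` of a Boolean combination of `ℬ` and a bound, so they can be
enumerated along `κ`; at stage `α` choose `x_α > β` in `ℬʰ ∩ ⋂_{i ≤ α} Aᵢ`. This set is
unbounded: `h` lives on some `𝒜ⱼ` with `j ≥ α`, `ℬʰ ∩ Aⱼ` is unbounded, and the fewer than `κ`
bounded sets `Aⱼ \ Aᵢ` (`i ≤ α`) have a common bound by regularity. Then `x_α ∉ Aᵢ` forces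
`α < i`, so `B \ Aᵢ` is bounded as well.
-/

open Set Cardinal

/-- Finite partial functions from a family of sets to `{0,1}` (as `Option Bool`):
`h s = some true` means `s` is taken positively, `some false` negatively. -/
def FF {α : Type*} (𝒜 : Set (Set α)) : Set (Set α → Option Bool) :=
  {h | (∀ s, h s ≠ none → s ∈ 𝒜) ∧ {s | h s ≠ none}.Finite}

/-- The Boolean combination determined by a partial function `h`. -/
def bc {α : Type*} (h : Set α → Option Bool) : Set α :=
  {x | ∀ s : Set α, (h s = some true → x ∈ s) ∧ (h s = some false → x ∉ s)}

/-- `h'` extends `h` as a partial function. -/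
def extFF {α : Type*} (h h' : Set α → Option Bool) : Prop :=
  ∀ s b, h s = some b → h' s = some b

/-- A family is κ-independent if every finite Boolean combination is unbounded. -/
def kIndepF {α : Type*} [Preorder α] (𝒜 : Set (Set α)) : Prop :=
  ∀ h ∈ FF 𝒜, ¬ BddAbove (bc h)
/-- A normal measure on `κ`: a κ-complete ultrafilter on `κ` closed under
diagonal intersections. -/
structure NormalMeasure (κ : Cardinal) where
  sets : Set (Set κ.ord.ToType)
  univ_mem : Set.univ ∈ sets
  empty_notMem : ∅ ∉ sets
  mem_of_superset : ∀ {s t : Set κ.ord.ToType}, s ∈ sets → s ⊆ t → t ∈ sets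
  ultra : ∀ s : Set κ.ord.ToType, s ∈ sets ∨ sᶜ ∈ sets
  complete : ∀ S : Set (Set κ.ord.ToType), S ⊆ sets → #S < κ → ⋂₀ S ∈ sets
  normal : ∀ A : κ.ord.ToType → Set κ.ord.ToType, (∀ i, A i ∈ sets) →
    {x | ∀ i < x, x ∈ A i} ∈ sets

/-- A bounded partition of `κ`: a partition of `κ` into bounded pieces. -/
def BoundedPartition (κ : Cardinal) (𝓔 : Set (Set κ.ord.ToType)) : Prop :=
  (∀ P ∈ 𝓔, BddAbove P) ∧ ⋃₀ 𝓔 = Set.univ ∧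
    (∀ P ∈ 𝓔, ∀ Q ∈ 𝓔, P ≠ Q → Disjoint P Q) ∧ ∅ ∉ 𝓔

/-- A condition of the poset `ℙ_𝒰`: a κ-independent family `𝒜` of size κ together
with `A ∈ 𝒰` meeting every finite Boolean combination of `𝒜` unboundedly. -/
def PCond (κ : Cardinal) (𝒰 : NormalMeasure κ)
    (𝒜 : Set (Set κ.ord.ToType)) (A : Set κ.ord.ToType) : Prop :=
  kIndepF 𝒜 ∧ #𝒜 = κ ∧ A ∈ 𝒰.sets ∧ ∀ h ∈ FF 𝒜, ¬ BddAbove (bc h ∩ A)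

universe u

section Cofinality

variable {α : Type u} [LinearOrder α] [NoMaxOrder α]

theorem bddAbove_of_mk_lt_cof {s : Set α} (hs : #s < Order.cof α) : BddAbove s :=
  not_isCofinal_iff_bddAbove.1 fun h => (Order.cof_le h).not_gt hs

theorem bddAbove_iUnion_of_mk_lt_cof {ι : Type u} {s : ι → Set α} (hι : #ι < Order.cof α)
    (hs : ∀ i, BddAbove (s i)) : BddAbove (⋃ i, s i) := by
  refine not_isCofinal_iff_bddAbove.1 fun h => ?_
  obtain ⟨i, hi⟩ := isCofinal_of_isCofinal_iUnion h hι
  exact not_isCofinal_iff_bddAbove.2 (hs i) hi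

theorem not_bddAbove_inter_iInter {ι : Type u} {S : Set α} {A : ι → Set α}
    (hS : ¬BddAbove S) (hι : #ι < Order.cof α) (hA : ∀ i, BddAbove (S \ A i)) :
    ¬BddAbove (S ∩ ⋂ i, A i) := by
  refine fun h => hS ((h.union (bddAbove_iUnion_of_mk_lt_cof hι hA)).mono fun x hx => ?_)
  by_cases hxA : ∀ i, x ∈ A i
  · exact Or.inl ⟨hx, mem_iInter.2 hxA⟩
  · obtain ⟨i, hi⟩ := not_forall.1 hxA
    exact Or.inr (mem_iUnion.2 ⟨i, hx, hi⟩)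

end Cofinality

theorem exists_forall_mem_forall_not_bddAbove_inter_range {ι T : Type u} [Preorder T]
    [Infinite T] [Nonempty ι] (hι : #ι ≤ #T) {S : ι → Set T} {W : T → Set T}
    (h : ∀ t a, ¬BddAbove (S t ∩ W a)) :
    ∃ x : T → T, (∀ a, x a ∈ W a) ∧ ∀ t, ¬BddAbove (S t ∩ range x) := by
  obtain ⟨e, he⟩ : ∃ e : T → ι × T, Function.Surjective e := by
    have : #(ι × T) ≤ #T := by
      calc #(ι × T) = #ι * #T := by rw [mk_prod, lift_id, lift_id]
        _ ≤ #T * #T := by gcongr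
        _ = #T := mul_eq_self (aleph0_le_mk T)
    obtain ⟨f⟩ := this
    exact ⟨Function.invFun f, Function.invFun_surjective f.injective⟩
  have hx : ∀ a, ∃ y ∈ S (e a).1 ∩ W a, ¬y ≤ (e a).2 := fun a =>
    not_bddAbove_iff'.1 (h _ a) _
  choose x hxSW hxgt using hx
  refine ⟨x, fun a => (hxSW a).2, fun t ⟨u, hu⟩ => ?_⟩
  obtain ⟨a, ha⟩ := he (t, u)
  have hxS := (hxSW a).1
  have hxu := hxgt a
  rw [ha] at hxS hxu
  exact hxu (hu ⟨hxS, mem_range_self a⟩)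

section FiniteCombinations

variable {α : Type u}

instance (𝒜 : Set (Set α)) : Nonempty (FF 𝒜) :=
  ⟨⟨fun _ => none, by simp [FF]⟩⟩

theorem FF_mono {𝒜 ℬ : Set (Set α)} (h : 𝒜 ⊆ ℬ) : FF 𝒜 ⊆ FF ℬ :=
  fun _ hh => ⟨fun s hs => h (hh.1 s hs), hh.2⟩

theorem exists_mem_FF_of_mem_FF_iUnion {ι : Type*} [Preorder ι] [IsDirected ι (· ≤ ·)]
    [Nonempty ι] {𝒜 : ι → Set (Set α)} (h𝒜 : Monotone 𝒜) {h : Set α → Option Bool}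
    (hh : h ∈ FF (⋃ i, 𝒜 i)) : ∃ j, h ∈ FF (𝒜 j) := by
  obtain ⟨hmem, hfin⟩ := hh
  have : ∀ s : {s | h s ≠ none}, ∃ i, s.1 ∈ 𝒜 i := fun s => mem_iUnion.1 (hmem s s.2)
  choose g hg using this
  have := hfin.to_subtype
  obtain ⟨j, hj⟩ := (finite_range g).bddAbove
  exact ⟨j, fun s hs => h𝒜 (hj (mem_range_self ⟨s, hs⟩)) (hg ⟨s, hs⟩), hfin⟩

-- A finite partial function is determined by its finite positive and negative supports.
theorem mk_FF_le {𝒜 : Set (Set α)} (h𝒜 : ℵ₀ ≤ #𝒜) : #(FF 𝒜) ≤ #𝒜 := by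
  classical
  let g : Finset 𝒜 × Finset 𝒜 → Set α → Option Bool := fun P s =>
    if hs : s ∈ 𝒜 then
      if ⟨s, hs⟩ ∈ P.1 then some true else if ⟨s, hs⟩ ∈ P.2 then some false else none
    else none
  have hg : FF 𝒜 ⊆ range g := by
    rintro h ⟨h𝒜, hfin⟩
    have hfin' : {s : 𝒜 | h s ≠ none}.Finite := hfin.preimage Subtype.val_injective.injOn
    have hpos : {s : 𝒜 | h s = some true}.Finite := hfin'.subset fun s hs => by simp_all
    have hneg : {s : 𝒜 | h s = some false}.Finite := hfin'.subset fun s hs => by simp_all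
    refine ⟨(hpos.toFinset, hneg.toFinset), funext fun s => ?_⟩
    by_cases hs : s ∈ 𝒜
    · rcases hsv : h s with _ | _ | _ <;> simp [g, hs, hsv]
    · have : h s = none := by_contra fun hn => hs (h𝒜 s hn)
      simp [g, hs, this]
  have : Infinite 𝒜 := infinite_iff.2 h𝒜
  calc #(FF 𝒜) ≤ #(range g) := mk_le_mk_of_subset hg
    _ ≤ #(Finset 𝒜 × Finset 𝒜) := mk_range_le
    _ = #𝒜 := by rw [mk_prod, lift_id, mk_finset_of_infinite, mul_eq_self h𝒜]

end FiniteCombinations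

theorem mk_iUnion_eq_of_forall_mk_eq {ι α : Type u} [Nonempty ι] {κ : Cardinal.{u}}
    (hκ : ℵ₀ ≤ κ) (hι : #ι ≤ κ) {s : ι → Set α} (hs : ∀ i, #(s i) = κ) :
    #(⋃ i, s i) = κ := by
  refine le_antisymm ?_ ?_
  · calc #(⋃ i, s i) ≤ #ι * ⨆ i, #(s i) := mk_iUnion_le s
      _ ≤ κ * κ := by simp only [hs, ciSup_const]; gcongr
      _ = κ := mul_eq_self hκ
  · obtain ⟨i⟩ := ‹Nonempty ι›
    exact hs i ▸ mk_le_mk_of_subset (subset_iUnion s i)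

section RegularCardinal

variable {κ : Cardinal.{u}}

theorem Cardinal.IsRegular.cof_ord_toType (hreg : κ.IsRegular) :
    Order.cof κ.ord.ToType = κ := by
  rw [Ordinal.cof_toType, hreg.cof_ord]

theorem not_bddAbove_bc_inter_iInter_Iic (hreg : κ.IsRegular)
    {𝒜 : κ.ord.ToType → Set (Set κ.ord.ToType)} {A : κ.ord.ToType → Set κ.ord.ToType}
    (h𝒜 : Monotone 𝒜) (hA : ∀ i j, i ≤ j → BddAbove (A j \ A i))
    (hcomb : ∀ i, ∀ h ∈ FF (𝒜 i), ¬BddAbove (bc h ∩ A i))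
    {h : Set κ.ord.ToType → Option Bool} (hh : h ∈ FF (⋃ i, 𝒜 i)) (a : κ.ord.ToType) :
    ¬BddAbove (bc h ∩ ⋂ i : Iic a, A i) := by
  have : Infinite κ.ord.ToType := infinite_iff.2 (by simpa using hreg.aleph0_le)
  have := noMaxOrder hreg.aleph0_le
  obtain ⟨j₀, hj₀⟩ := exists_mem_FF_of_mem_FF_iUnion h𝒜 hh
  have hIic : #(Iic a) < Order.cof κ.ord.ToType := by
    simpa [hreg.cof_ord_toType] using mk_Iic_lt a (by simp) (by simpa using hreg.aleph0_le)
  have hj : ¬BddAbove (bc h ∩ A (max j₀ a)) := hcomb _ h (FF_mono (h𝒜 (le_max_left _ _)) hj₀)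
  have hdiff : ∀ i : Iic a, BddAbove ((bc h ∩ A (max j₀ a)) \ A i) := fun i =>
    (hA i _ (i.2.trans (le_max_right _ _))).mono (sdiff_subset_sdiff_left inter_subset_right)
  exact fun hbdd => not_bddAbove_inter_iInter hj hIic hdiff
    (hbdd.mono (inter_subset_inter_left _ inter_subset_left))

theorem bddAbove_diagInter_union_range_diff (hreg : κ.IsRegular)
    {A : κ.ord.ToType → Set κ.ord.ToType} {x : κ.ord.ToType → κ.ord.ToType}
    (hx : ∀ a, ∀ i ≤ a, x a ∈ A i) (i : κ.ord.ToType) :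
    BddAbove (({y | ∀ j < y, y ∈ A j} ∪ range x) \ A i) := by
  have := noMaxOrder hreg.aleph0_le
  have hIio : #(x '' Iio i) < Order.cof κ.ord.ToType := by
    simpa [hreg.cof_ord_toType] using mk_image_le.trans_lt (mk_Iio_lt i (by simp))
  refine ((bddAbove_Iic (a := i)).union (bddAbove_of_mk_lt_cof hIio)).mono ?_
  rintro y ⟨hy | ⟨a, rfl⟩, hyA⟩
  · exact Or.inl (not_lt.1 fun hiy => hyA (hy i hiy))
  · exact Or.inr (mem_image_of_mem x (not_le.1 fun hia => hyA (hx a i hia)))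

end RegularCardinal

theorem stmt_15_general (κ : Cardinal) (hreg : κ.IsRegular)
    (𝒰 : NormalMeasure κ)
    (𝒜seq : κ.ord.ToType → Set (Set κ.ord.ToType))
    (Aseq : κ.ord.ToType → Set κ.ord.ToType)
    (hcond : ∀ i, PCond κ 𝒰 (𝒜seq i) (Aseq i))
    (hdec : ∀ i j, i ≤ j → 𝒜seq i ⊆ 𝒜seq j ∧ BddAbove (Aseq j \ Aseq i)) :
    ∃ ℬ B, PCond κ 𝒰 ℬ B ∧ ∀ i, 𝒜seq i ⊆ ℬ ∧ BddAbove (B \ Aseq i) := by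
  have hκ := hreg.aleph0_le
  have : Infinite κ.ord.ToType := infinite_iff.2 (by simpa using hκ)
  have hmono : Monotone 𝒜seq := fun i j hij => (hdec i j hij).1
  have hcomb : ∀ i, ∀ h ∈ FF (𝒜seq i), ¬BddAbove (bc h ∩ Aseq i) := fun i => (hcond i).2.2.2
  have hℬ : #(⋃ i, 𝒜seq i) = κ :=
    mk_iUnion_eq_of_forall_mk_eq hκ (mk_ord_toType κ).le fun i => (hcond i).2.1
  obtain ⟨x, hxA, hxh⟩ := exists_forall_mem_forall_not_bddAbove_inter_range
    (S := fun h : FF (⋃ i, 𝒜seq i) => bc h.1) (W := fun a => ⋂ i : Iic a, Aseq i)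
    ((mk_FF_le (hℬ.symm ▸ hκ)).trans (by rw [hℬ, mk_ord_toType]))
    fun h a => not_bddAbove_bc_inter_iInter_Iic hreg hmono (fun i j hij => (hdec i j hij).2)
      hcomb h.2 a
  refine ⟨⋃ i, 𝒜seq i, {y | ∀ i < y, y ∈ Aseq i} ∪ range x, ⟨?indep, hℬ, ?measure, ?comb⟩,
    fun i => ⟨subset_iUnion 𝒜seq i, ?bdd⟩⟩
  case indep =>
    intro h hh hbdd
    obtain ⟨j, hj⟩ := exists_mem_FF_of_mem_FF_iUnion hmono hh
    exact hcomb j h hj (hbdd.mono inter_subset_left)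
  case measure =>
    exact 𝒰.mem_of_superset (𝒰.normal Aseq fun i => (hcond i).2.2.1) subset_union_left
  case comb =>
    exact fun h hh hbdd => hxh ⟨h, hh⟩ (hbdd.mono (inter_subset_inter_right _ subset_union_right))
  case bdd =>
    exact bddAbove_diagInter_union_range_diff hreg (fun a i hia => mem_iInter.1 (hxA a) ⟨i, hia⟩) i

/-- `ℙ_𝒰` is κ⁺-closed: every decreasing κ-sequence of conditions, where
`(𝒜₁, A₁) ≤ (𝒜₀, A₀)` iff `𝒜₀ ⊆ 𝒜₁` and `A₁ \ A₀` is bounded, has a lower bound. -/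
theorem stmt_15 (κ : Cardinal) (hreg : κ.IsRegular) (hunc : ℵ₀ < κ)
    (𝒰 : NormalMeasure κ)
    (𝒜seq : κ.ord.ToType → Set (Set κ.ord.ToType))
    (Aseq : κ.ord.ToType → Set κ.ord.ToType)
    (hcond : ∀ i, PCond κ 𝒰 (𝒜seq i) (Aseq i))
    (hdec : ∀ i j, i ≤ j → 𝒜seq i ⊆ 𝒜seq j ∧ BddAbove (Aseq j \ Aseq i)) :
    ∃ ℬ B, PCond κ 𝒰 ℬ B ∧ ∀ i, 𝒜seq i ⊆ ℬ ∧ BddAbove (B \ Aseq i) :=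
  stmt_15_general κ hreg 𝒰 𝒜seq Aseq hcond hdec
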